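/- For m ∈ ℕ, the number of triples (m1, m2, m3) of nonnegative integers with m1 + m2 + m3 = m − 1, counted up to cyclic permutation, equals ⌈m(m+1)/6⌉. -/

import Mathlib

/-!
Every cyclic orbit of triples has exactly one canonical representative: the rotation
starting at a minimal entry whose cyclic predecessor is not minimal (or the triple itself
if it is constant). Canonical triples of sum `n + 3` either start with `0`, and there are
`n + 3` of those, or arise from the canonical triples of sum `n` by adding `1` to every
entry. Hence their number `c n` satisfies `c (n + 3) = c n + (n + 3)`, which is also the
recursion of `⌈(n + 1) (n + 2) / 6⌉`.
-/

def cyc (p : ℕ × ℕ × ℕ) : ℕ × ℕ × ℕ := (p.2.1, p.2.2, p.1)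

def cycOrbit (p : ℕ × ℕ × ℕ) : Set (ℕ × ℕ × ℕ) := {p, cyc p, cyc (cyc p)}

def IsCanonical (p : ℕ × ℕ × ℕ) : Prop :=
  (p.1 ≤ p.2.1 ∧ p.1 < p.2.2) ∨ (p.1 = p.2.1 ∧ p.2.1 = p.2.2)

instance : DecidablePred IsCanonical := fun _ => by unfold IsCanonical; infer_instance

lemma cyc_cyc_cyc (p : ℕ × ℕ × ℕ) : cyc (cyc (cyc p)) = p := rfl

lemma sum_cyc (p : ℕ × ℕ × ℕ) :
    (cyc p).1 + (cyc p).2.1 + (cyc p).2.2 = p.1 + p.2.1 + p.2.2 := by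
  simp only [cyc]; omega

lemma cycOrbit_cyc (p : ℕ × ℕ × ℕ) : cycOrbit (cyc p) = cycOrbit p := by
  ext q
  simp only [cycOrbit, cyc_cyc_cyc, Set.mem_insert_iff, Set.mem_singleton_iff]
  tauto

lemma exists_isCanonical_cycOrbit_eq (p : ℕ × ℕ × ℕ) :
    ∃ q, q.1 + q.2.1 + q.2.2 = p.1 + p.2.1 + p.2.2 ∧ IsCanonical q ∧ cycOrbit q = cycOrbit p := by
  have hcases : IsCanonical p ∨ IsCanonical (cyc p) ∨ IsCanonical (cyc (cyc p)) := by
    simp only [IsCanonical, cyc]; omega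
  rcases hcases with h | h | h
  · exact ⟨p, rfl, h, rfl⟩
  · exact ⟨cyc p, sum_cyc p, h, cycOrbit_cyc p⟩
  · exact ⟨cyc (cyc p), by rw [sum_cyc, sum_cyc], h, by rw [cycOrbit_cyc, cycOrbit_cyc]⟩

lemma IsCanonical.eq_of_mem_cycOrbit {p q : ℕ × ℕ × ℕ} (hp : IsCanonical p)
    (hq : IsCanonical q) (h : q ∈ cycOrbit p) : q = p := by
  obtain ⟨a, b, c⟩ := p
  simp only [IsCanonical, cycOrbit, cyc, Set.mem_insert_iff, Set.mem_singleton_iff] at *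
  rcases h with rfl | rfl | rfl <;> simp only [Prod.mk.injEq] at * <;> omega

lemma injOn_cycOrbit : Set.InjOn cycOrbit {p | IsCanonical p} := fun p hp _ hq h =>
  IsCanonical.eq_of_mem_cycOrbit hq hp (h ▸ Set.mem_insert p _)

def canonicalOfSum (n : ℕ) : Finset (ℕ × ℕ × ℕ) :=
  (Finset.Iic n ×ˢ Finset.Iic n ×ˢ Finset.Iic n).filter
    (fun p => p.1 + p.2.1 + p.2.2 = n ∧ IsCanonical p)

lemma mem_canonicalOfSum {n : ℕ} {p : ℕ × ℕ × ℕ} :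
    p ∈ canonicalOfSum n ↔ p.1 + p.2.1 + p.2.2 = n ∧ IsCanonical p := by
  simp only [canonicalOfSum, Finset.mem_filter, Finset.mem_product, Finset.mem_Iic]
  constructor
  · exact And.right
  · rintro ⟨h, hc⟩; exact ⟨⟨by omega, by omega, by omega⟩, h, hc⟩

lemma card_cycOrbits (n : ℕ) :
    Nat.card {O : Set (ℕ × ℕ × ℕ) // ∃ p : ℕ × ℕ × ℕ, p.1 + p.2.1 + p.2.2 = n ∧ O = cycOrbit p} =
      (canonicalOfSum n).card := by
  have himage : cycOrbit '' {p | p.1 + p.2.1 + p.2.2 = n} = cycOrbit '' canonicalOfSum n := by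
    ext O
    simp only [Set.mem_image, Set.mem_ofPred_eq, Finset.mem_coe, mem_canonicalOfSum]
    constructor
    · rintro ⟨p, rfl, rfl⟩
      obtain ⟨q, hsum, hq, hO⟩ := exists_isCanonical_cycOrbit_eq p
      exact ⟨q, ⟨hsum, hq⟩, hO⟩
    · rintro ⟨q, ⟨hsum, -⟩, hO⟩
      exact ⟨q, hsum, hO⟩
  calc Nat.card {O // ∃ p : ℕ × ℕ × ℕ, p.1 + p.2.1 + p.2.2 = n ∧ O = cycOrbit p}
      = (cycOrbit '' {p | p.1 + p.2.1 + p.2.2 = n}).ncard :=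
        Nat.card_congr (Equiv.subtypeEquivRight fun O => by simp [eq_comm])
    _ = (cycOrbit '' canonicalOfSum n).ncard := by rw [himage]
    _ = (canonicalOfSum n : Set (ℕ × ℕ × ℕ)).ncard :=
        (injOn_cycOrbit.mono fun p hp => (mem_canonicalOfSum.1 hp).2).ncard_image
    _ = (canonicalOfSum n).card := Set.ncard_coe_finset _

lemma canonicalOfSum_add_three (n : ℕ) : canonicalOfSum (n + 3) =
    (canonicalOfSum n).image (fun p => (p.1 + 1, p.2.1 + 1, p.2.2 + 1)) ∪
      (Finset.range (n + 3)).image (fun b => (0, b, n + 3 - b)) := by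
  ext ⟨a, b, c⟩
  simp only [mem_canonicalOfSum, Finset.mem_union, Finset.mem_image, Prod.mk.injEq,
    Finset.mem_range, IsCanonical, Prod.exists]
  constructor
  · rintro ⟨hsum, hc⟩
    rcases Nat.eq_zero_or_pos a with rfl | ha
    · exact Or.inr ⟨b, by omega, rfl, rfl, by omega⟩
    · exact Or.inl ⟨a - 1, b - 1, c - 1, ⟨by omega, by omega⟩, by omega, by omega, by omega⟩
  · rintro (⟨x, y, z, ⟨hsum, hc⟩, rfl, rfl, rfl⟩ | ⟨d, hd, rfl, rfl, rfl⟩) <;> omega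

lemma card_canonicalOfSum_add_three (n : ℕ) :
    (canonicalOfSum (n + 3)).card = (canonicalOfSum n).card + (n + 3) := by
  have hshift : Function.Injective fun p : ℕ × ℕ × ℕ => (p.1 + 1, p.2.1 + 1, p.2.2 + 1) := by
    rintro ⟨_, _, _⟩ ⟨_, _, _⟩ h
    simp only [Prod.mk.injEq] at h ⊢
    omega
  have hedge : Set.InjOn (fun b => ((0 : ℕ), b, n + 3 - b)) (Finset.range (n + 3)) :=
    fun _ _ _ _ h => (Prod.mk.inj (Prod.mk.inj h).2).1
  have hdisj : Disjoint ((canonicalOfSum n).image fun p => (p.1 + 1, p.2.1 + 1, p.2.2 + 1))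
      ((Finset.range (n + 3)).image fun b => (0, b, n + 3 - b)) := by
    simp only [Finset.disjoint_left, Finset.mem_image, Finset.mem_range]
    rintro _ ⟨_, -, rfl⟩ ⟨_, -, h⟩
    exact absurd (Prod.mk.inj h).1 (Nat.succ_ne_zero _).symm
  rw [canonicalOfSum_add_three, Finset.card_union_of_disjoint hdisj,
    Finset.card_image_of_injective _ hshift, Finset.card_image_of_injOn hedge, Finset.card_range]

lemma card_canonicalOfSum : ∀ n : ℕ, (canonicalOfSum n).card = ((n + 1) * (n + 2) + 5) / 6
  | 0 => by decide
  | 1 => by decide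
  | 2 => by decide
  | n + 3 => by
      rw [card_canonicalOfSum_add_three, card_canonicalOfSum n]
      have h : (n + 3 + 1) * (n + 3 + 2) = (n + 1) * (n + 2) + 6 * (n + 3) := by ring
      omega

/-- For a positive integer `m`, the number of triples `(m₁, m₂, m₃)` of nonnegative
integers with `m₁ + m₂ + m₃ = m - 1`, counted up to cyclic permutation (i.e. the number
of orbits `{p, cyc p, cyc² p}`), equals `⌈m (m + 1) / 6⌉`. -/
theorem stmt5 (m : ℕ) (hm : 1 ≤ m) :
    Nat.card {O : Set (ℕ × ℕ × ℕ) //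
      ∃ p : ℕ × ℕ × ℕ, p.1 + p.2.1 + p.2.2 = m - 1 ∧
        O = {p, (p.2.1, p.2.2, p.1), (p.2.2, p.1, p.2.1)}} = (m * (m + 1) + 5) / 6 := by
  obtain ⟨n, rfl⟩ : ∃ n, m = n + 1 := ⟨m - 1, by omega⟩
  exact (card_cycOrbits n).trans (card_canonicalOfSum n)
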